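/- Let H be a valued hyperfield. Then the function d (defined by d(x,y) := |z| for any z ∈ x+(−y) when x ≠ y, and d(x,x) := 0) is a well-defined ultrametric on H: for x ≠ y all elements z ∈ x+(−y) have the same absolute value and this value is nonzero; d(x,y) = d(y,x) for all x, y; d(x,y) = 0 if and only if x = y; and d(x,z) ≤ max(d(x,y), d(y,z)) for all x, y, z. -/
import Mathlib


/-- A (Krasner) valued hyperfield: a hyperfield with a multivalued addition,
single-valued multiplication, an absolute value, the induced distance `dist`,
and the norm `rho`. -/
structure ValuedHyperfield where
  carrier : Type
  add : carrier → carrier → Set carrier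
  mul : carrier → carrier → carrier
  zero : carrier
  one : carrier
  neg : carrier → carrier
  abs : carrier → ℝ
  dist : carrier → carrier → ℝ
  rho : ℝ
  add_comm : ∀ x y, add x y = add y x
  add_assoc : ∀ x y z, (⋃ t ∈ add x y, add t z) = ⋃ t ∈ add y z, add x t
  add_zero : ∀ x, add x zero = {x}
  neg_mem : ∀ x, zero ∈ add x (neg x)
  neg_unique : ∀ x y, zero ∈ add x y → y = neg x
  reverse : ∀ x y z, x ∈ add y (neg z) ↔ y ∈ add x z
  mul_comm : ∀ x y, mul x y = mul y x
  mul_assoc : ∀ x y z, mul (mul x y) z = mul x (mul y z)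
  mul_one : ∀ x, mul x one = x
  one_ne_zero : one ≠ zero
  mul_inv : ∀ x, x ≠ zero → ∃ y, mul x y = one
  distrib : ∀ x y z, (fun t => mul t z) '' add x y ⊆ add (mul x z) (mul y z)
  abs_nonneg : ∀ x, 0 ≤ abs x
  abs_eq_zero_iff : ∀ x, abs x = 0 ↔ x = zero
  abs_mul : ∀ x y, abs (mul x y) = abs x * abs y
  abs_add_le : ∀ x y z, z ∈ add x y → abs z ≤ max (abs x) (abs y)
  abs_add_unique : ∀ x y, zero ∉ add x y →
    ∀ z w, z ∈ add x y → w ∈ add x y → abs z = abs w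
  dist_self : ∀ x, dist x x = 0
  dist_eq : ∀ x y z, x ≠ y → z ∈ add x (neg y) → dist x y = abs z
  rho_nonneg : 0 ≤ rho
  rho_ball : ∀ x y, (∃ w, add x y = {z | dist z w ≤ rho * max (abs x) (abs y)}) ∨
      (∃ w, add x y = {z | dist z w < rho * max (abs x) (abs y)})
  rho_min : ∀ r : ℝ, 0 ≤ r →
      (∀ x y, (∃ w, add x y = {z | dist z w ≤ r * max (abs x) (abs y)}) ∨
        (∃ w, add x y = {z | dist z w < r * max (abs x) (abs y)})) → rho ≤ r

/-- The valuation is discrete: every nonzero value of the absolute value is an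
isolated point of the image of the absolute value. -/
def ValuedHyperfield.Discrete (V : ValuedHyperfield) : Prop :=
  ∀ r ∈ Set.range V.abs, r ≠ 0 →
    ∃ ε > (0 : ℝ), ∀ s ∈ Set.range V.abs, |s - r| < ε → s = r

/-- `θ` is the largest absolute value which is strictly less than 1, attained
at some nonzero element. -/
def ValuedHyperfield.IsTheta (V : ValuedHyperfield) (θ : ℝ) : Prop :=
  (∃ x, x ≠ V.zero ∧ V.abs x = θ) ∧ θ < 1 ∧
    ∀ x, x ≠ V.zero → V.abs x < 1 → V.abs x ≤ θ

namespace ValuedHyperfield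

variable (V : ValuedHyperfield)

lemma neg_neg' (x : V.carrier) : V.neg (V.neg x) = x := by
  have h : V.zero ∈ V.add (V.neg x) x := by
    rw [V.add_comm]; exact V.neg_mem x
  exact (V.neg_unique (V.neg x) x h).symm

lemma sub_nonempty (x y : V.carrier) : (V.add x (V.neg y)).Nonempty := by
  have h0 : V.zero ∈ V.add (V.neg y) y := by
    rw [V.add_comm]; exact V.neg_mem y
  have hx : x ∈ V.add x V.zero := by rw [V.add_zero]; rfl
  have hmem : x ∈ ⋃ t ∈ V.add (V.neg y) y, V.add x t := Set.mem_biUnion h0 hx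
  rw [← V.add_assoc] at hmem
  obtain ⟨t, ht, -⟩ := Set.mem_iUnion₂.mp hmem
  exact ⟨t, ht⟩

lemma zero_not_mem_sub {x y : V.carrier} (h : x ≠ y) :
    V.zero ∉ V.add x (V.neg y) := by
  intro h0
  have := V.neg_unique x (V.neg y) h0
  have : V.neg (V.neg y) = V.neg (V.neg x) := by rw [← this]
  rw [V.neg_neg', V.neg_neg'] at this
  exact h this.symm

lemma mem_sub_ne_zero {x y z : V.carrier} (h : x ≠ y)
    (hz : z ∈ V.add x (V.neg y)) : z ≠ V.zero := by
  rintro rfl; exact V.zero_not_mem_sub h hz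

lemma mul_zero' (z : V.carrier) : V.mul V.zero z = V.zero := by
  rw [← V.abs_eq_zero_iff, V.abs_mul, (V.abs_eq_zero_iff V.zero).mpr rfl, zero_mul]

lemma neg_one_mul (z : V.carrier) : V.mul (V.neg V.one) z = V.neg z := by
  have h0 : V.zero ∈ V.add V.one (V.neg V.one) := V.neg_mem V.one
  have himg : V.mul V.zero z ∈ (fun t => V.mul t z) '' V.add V.one (V.neg V.one) :=
    ⟨V.zero, h0, rfl⟩
  have hmem := V.distrib V.one (V.neg V.one) z himg
  rw [V.mul_zero'] at hmem
  have h1 : V.mul V.one z = z := by rw [V.mul_comm, V.mul_one]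
  rw [h1] at hmem
  exact V.neg_unique z _ hmem

lemma abs_one' : V.abs V.one = 1 := by
  have h : V.abs V.one * V.abs V.one = V.abs V.one := by
    rw [← V.abs_mul, V.mul_one]
  have hne : V.abs V.one ≠ 0 := fun hc => V.one_ne_zero ((V.abs_eq_zero_iff _).mp hc)
  have h2 : V.abs V.one * (V.abs V.one - 1) = 0 := by ring_nf; linarith
  rcases mul_eq_zero.mp h2 with h3 | h3
  · exact absurd h3 hne
  · linarith

lemma abs_neg' (z : V.carrier) : V.abs (V.neg z) = V.abs z := by
  have hsq : V.abs (V.neg V.one) * V.abs (V.neg V.one) = 1 := by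
    rw [← V.abs_mul, V.neg_one_mul, V.neg_neg', V.abs_one']
  have hpos : 0 ≤ V.abs (V.neg V.one) := V.abs_nonneg _
  have h1 : V.abs (V.neg V.one) = 1 := by nlinarith
  rw [← V.neg_one_mul, V.abs_mul, h1, one_mul]

lemma neg_mem_sub {x y z : V.carrier} (hz : z ∈ V.add x (V.neg y)) :
    V.neg z ∈ V.add y (V.neg x) := by
  have h1 : x ∈ V.add z y := (V.reverse z x y).mp hz
  have h2 : x ∈ V.add y z := by rwa [V.add_comm] at h1
  have h3 : y ∈ V.add x (V.neg z) := (V.reverse y x z).mpr h2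
  have h4 : y ∈ V.add (V.neg z) x := by rwa [V.add_comm] at h3
  exact (V.reverse (V.neg z) y x).mpr h4

lemma dist_nonneg' (x y : V.carrier) : 0 ≤ V.dist x y := by
  rcases eq_or_ne x y with rfl | h
  · rw [V.dist_self]
  · obtain ⟨z, hz⟩ := V.sub_nonempty x y
    rw [V.dist_eq x y z h hz]
    exact V.abs_nonneg z

lemma dist_symm' (x y : V.carrier) : V.dist x y = V.dist y x := by
  rcases eq_or_ne x y with rfl | h
  · rfl
  · obtain ⟨z, hz⟩ := V.sub_nonempty x y
    rw [V.dist_eq x y z h hz, V.dist_eq y x (V.neg z) h.symm (V.neg_mem_sub hz),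
      V.abs_neg']

end ValuedHyperfield

theorem stmt14 (V : ValuedHyperfield) :
    (∀ x y : V.carrier, x ≠ y →
      ∃ r : ℝ, r ≠ 0 ∧ ∀ z ∈ V.add x (V.neg y), V.abs z = r) ∧
    (∀ x y : V.carrier, V.dist x y = V.dist y x) ∧
    (∀ x y : V.carrier, V.dist x y = 0 ↔ x = y) ∧
    (∀ x y z : V.carrier, V.dist x z ≤ max (V.dist x y) (V.dist y z)) := by
  refine ⟨?_, fun x y => V.dist_symm' x y, ?_, ?_⟩
  · intro x y h
    obtain ⟨z, hz⟩ := V.sub_nonempty x y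
    refine ⟨V.abs z, ?_, ?_⟩
    · intro hc
      exact V.mem_sub_ne_zero h hz ((V.abs_eq_zero_iff z).mp hc)
    · intro w hw
      exact V.abs_add_unique x (V.neg y) (V.zero_not_mem_sub h) w z hw hz
  · intro x y
    constructor
    · intro h0
      by_contra h
      obtain ⟨z, hz⟩ := V.sub_nonempty x y
      rw [V.dist_eq x y z h hz] at h0
      exact V.mem_sub_ne_zero h hz ((V.abs_eq_zero_iff z).mp h0)
    · rintro rfl; exact V.dist_self x
  · intro x y z
    rcases eq_or_ne x z with rfl | hxz
    · rw [V.dist_self]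
      exact le_max_of_le_left (V.dist_nonneg' x y)
    rcases eq_or_ne x y with rfl | hxy
    · exact le_max_right _ _
    rcases eq_or_ne y z with rfl | hyz
    · exact le_max_left _ _
    obtain ⟨u, hu⟩ := V.sub_nonempty x y
    obtain ⟨w, hw⟩ := V.sub_nonempty x z
    have h1 : x ∈ V.add u y := (V.reverse u x y).mp hu
    have hmem : w ∈ ⋃ t ∈ V.add u y, V.add t (V.neg z) := Set.mem_biUnion h1 hw
    rw [V.add_assoc] at hmem
    obtain ⟨t, ht, hwt⟩ := Set.mem_iUnion₂.mp hmem
    rw [V.dist_eq x z w hxz hw, V.dist_eq x y u hxy hu, V.dist_eq y z t hyz ht]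
    exact V.abs_add_le u t w hwt
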